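/- Let X be an arbitrary index set. A function g : X × X → [0, 2] is the semivariogram of a unit process on X with no drift if, and only if, (1) g(x,y) = g(y,x) for all x, y ∈ X, and (2) for every positive integer n, every choice of points x₁,…,xₙ ∈ X, and every real symmetric n×n matrix Λ = [λ_{kℓ}], one has ∑_{k,ℓ=1}^n λ_{kℓ} g(x_k, x_ℓ) ≤ σ(Λ) − γ(Λ, {−1,1}), where σ(Λ) = ∑_{k,ℓ=1}^n λ_{kℓ} and γ(Λ, {−1,1}) = min{ ∑_{k,ℓ} λ_{kℓ} z_k z_ℓ : z ∈ {−1,1}ⁿ }. -/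

import Mathlib

/-!
If `ω` is a `±1`-valued process then `(ω x - ω y)² / 2 = 1 - ω x ω y`, so `g = 1 - 𝔼[ω x ω y]`;
for every `Λ` the random variable `∑ λ_{kℓ} ω(x_k) ω(x_ℓ)` is a value of the quadratic form of `Λ`
at a sign vector, hence at least `γ(Λ, {-1, 1})`, and taking expectations gives the inequalities.

Conversely, after symmetrizing `Λ` the inequalities say that no linear functional separates the
matrix `1 - g` on a finite set `s` from the rank-one sign matrices `(z_k z_ℓ)`, so by Hahn–Banach
`1 - g` is a convex combination of them; averaging the weights with those of `-z` makes them
sign-symmetric, which gives mean zero. These weight sets are compact and stable under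
marginalization, so a compactness argument chooses them consistently for all finite `s`, and since
cylinders in `{-1, 1}^X` are clopen, hence compact, the resulting content extends to a probability
measure on `{-1, 1}^X` (Kolmogorov).
-/

open MeasureTheory

def IsUnitProcessSemivariogram {X : Type*} (g : X → X → ℝ) : Prop :=
  ∃ P : MeasureTheory.Measure (X → ℝ), MeasureTheory.IsProbabilityMeasure P ∧
    (∀ x : X, ∀ᵐ ω ∂P, ω x ∈ ({-1, 1} : Set ℝ)) ∧
    (∀ x y : X, MeasureTheory.Integrable (fun ω => ω x - ω y) P) ∧
    (∀ x y : X, MeasureTheory.Integrable (fun ω => (ω x - ω y)^2) P) ∧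
    (∀ x y : X, ∫ ω, (ω x - ω y) ∂P = 0) ∧
    (∀ x y : X, g x y = (1/2) * ∫ ω, (ω x - ω y)^2 ∂P)

open Set Filter

def spin (b : Bool) : ℝ := if b then 1 else -1

@[simp] lemma spin_true : spin true = 1 := rfl

@[simp] lemma spin_false : spin false = -1 := rfl

lemma spin_mem (b : Bool) : spin b ∈ ({-1, 1} : Set ℝ) := by cases b <;> simp

lemma spin_compl {ι : Type*} (b : ι → Bool) (k : ι) : spin (bᶜ k) = -spin (b k) := by
  cases h : b k <;> simp [h]

lemma spin_decide_eq_one {z : ℝ} (hz : z = -1 ∨ z = 1) : spin (decide (z = 1)) = z := by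
  rcases hz with rfl | rfl <;> norm_num

lemma sum_comp_compl {γ M : Type*} [Fintype γ] [BooleanAlgebra γ] [AddCommMonoid M] (F : γ → M) :
    ∑ b, F bᶜ = ∑ b, F b :=
  Fintype.sum_bijective _ compl_involutive.bijective _ _ fun _ => rfl

section SignGap

variable {ι κ : Type*} [Fintype ι] [Fintype κ]

/-- The γ-gap `γ(Λ, {-1, 1})`. -/
noncomputable def signGap (Λ : Matrix ι ι ℝ) : ℝ :=
  sInf {v : ℝ | ∃ z : ι → ℝ, (∀ i, z i = -1 ∨ z i = 1) ∧ v = ∑ k, ∑ l, Λ k l * z k * z l}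

lemma signGap_le (Λ : Matrix ι ι ℝ) {z : ι → ℝ} (hz : ∀ i, z i = -1 ∨ z i = 1) :
    signGap Λ ≤ ∑ k, ∑ l, Λ k l * z k * z l := by
  refine csInf_le ?_ ⟨z, hz, rfl⟩
  refine ((finite_range fun b : ι → Bool => ∑ k, ∑ l, Λ k l * spin (b k) * spin (b l)).subset
    ?_).bddBelow
  rintro _ ⟨z, hz, rfl⟩
  exact ⟨fun i => decide (z i = 1), by simp only [spin_decide_eq_one (hz _)]⟩

lemma le_signGap (Λ : Matrix ι ι ℝ) {u : ℝ}
    (h : ∀ b : ι → Bool, u ≤ ∑ k, ∑ l, Λ k l * spin (b k) * spin (b l)) : u ≤ signGap Λ := by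
  refine le_csInf ⟨_, 1, fun _ => Or.inr rfl, rfl⟩ ?_
  rintro _ ⟨z, hz, rfl⟩
  simpa only [spin_decide_eq_one (hz _)] using h fun i => decide (z i = 1)

lemma sum_sum_comp_equiv (e : κ ≃ ι) (F : ι → ι → ℝ) :
    ∑ k, ∑ l, F (e k) (e l) = ∑ a, ∑ b, F a b :=
  Fintype.sum_equiv e _ _ fun _ => Fintype.sum_equiv e _ _ fun _ => rfl

lemma sum_sum_symmetrize_mul (Λ : Matrix ι ι ℝ) {F : ι → ι → ℝ} (hF : ∀ k l, F k l = F l k) :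
    ∑ k, ∑ l, (Λ k l + Λ l k) / 2 * F k l = ∑ k, ∑ l, Λ k l * F k l := by
  have hswap : ∑ k, ∑ l, Λ l k * F k l = ∑ k, ∑ l, Λ k l * F k l := by
    rw [Finset.sum_comm]
    simp_rw [hF]
  simp_rw [add_div, add_mul, Finset.sum_add_distrib, div_mul_eq_mul_div, ← Finset.sum_div, hswap]
  ring

end SignGap

lemma signGap_le_sum_mul_one_sub_of_forall_fin {X ι : Type*} [Fintype ι] {g : X → X → ℝ}
    (hsym : ∀ x y, g x y = g y x)
    (hineq : ∀ (n : ℕ), 0 < n → ∀ (pts : Fin n → X) (Λ : Matrix (Fin n) (Fin n) ℝ), Λ.IsSymm →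
       ∑ k, ∑ l, Λ k l * g (pts k) (pts l) ≤
         (∑ k, ∑ l, Λ k l) -
           sInf {v : ℝ | ∃ z : Fin n → ℝ, (∀ i, z i = -1 ∨ z i = 1) ∧
             v = ∑ k, ∑ l, Λ k l * z k * z l})
    (pts : ι → X) (Λ : Matrix ι ι ℝ) :
    signGap Λ ≤ ∑ k, ∑ l, Λ k l * (1 - g (pts k) (pts l)) := by
  rcases (Fintype.card ι).eq_zero_or_pos with hn | hn
  · have : IsEmpty ι := Fintype.card_eq_zero_iff.1 hn
    simpa using signGap_le Λ (z := 1) fun _ => Or.inr rfl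
  let e := (Fintype.equivFin ι).symm
  -- the symmetrization of `Λ`, transported to `Fin n`, has the same quadratic forms as `Λ`
  let Λ' : Matrix (Fin (Fintype.card ι)) (Fin (Fintype.card ι)) ℝ :=
    Matrix.of fun k l => (Λ (e k) (e l) + Λ (e l) (e k)) / 2
  have hΛ' : ∀ F : ι → ι → ℝ, (∀ a b, F a b = F b a) →
      ∑ k, ∑ l, Λ' k l * F (e k) (e l) = ∑ a, ∑ b, Λ a b * F a b := fun F hF =>
    (sum_sum_comp_equiv e fun a b => (Λ a b + Λ b a) / 2 * F a b).trans
      (sum_sum_symmetrize_mul Λ hF)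
  have hgap : signGap Λ ≤ signGap Λ' := le_signGap Λ' fun b => by
    have := hΛ' (fun a c => spin (b (e.symm a)) * spin (b (e.symm c))) fun _ _ => mul_comm _ _
    simp only [Equiv.symm_apply_apply] at this
    simp_rw [mul_assoc, this, ← mul_assoc]
    exact signGap_le Λ fun a => spin_mem _
  have key := hineq _ hn (pts ∘ e) Λ' (Matrix.IsSymm.ext_iff.2 fun k l => by
    simp only [Λ', Matrix.of_apply, add_comm])
  have hg := hΛ' (fun a b => g (pts a) (pts b)) fun a b => hsym _ _
  have hσ := hΛ' (fun _ _ => 1) fun _ _ => rfl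
  simp only [mul_one] at hσ
  simp only [mul_sub, mul_one, Finset.sum_sub_distrib]
  change _ ≤ _ - signGap Λ' at key
  simp only [Function.comp_apply] at key
  linarith

lemma exists_weights_of_mem_convexHull_range {α E : Type*} [Fintype α] [AddCommGroup E]
    [Module ℝ E] {v : α → E} {x : E} (hx : x ∈ convexHull ℝ (range v)) :
    ∃ w : α → ℝ, (∀ a, 0 ≤ w a) ∧ ∑ a, w a = 1 ∧ ∑ a, w a • v a = x := by
  classical
  have hv : range v = Fintype.linearCombination ℝ v '' range fun a => Pi.single a 1 := by
    rw [← range_comp]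
    congr 1
    ext a
    simp [Fintype.linearCombination_apply_single]
  rw [hv, ← LinearMap.image_convexHull, convexHull_rangle_single_eq_stdSimplex] at hx
  obtain ⟨w, ⟨hw0, hw1⟩, rfl⟩ := hx
  exact ⟨w, hw0, hw1, (Fintype.linearCombination_apply ℝ v w).symm⟩

section SpinCorrelations

variable {ι : Type*} [Fintype ι]

def spinCorr (b : ι → Bool) : ι → ι → ℝ := fun k l => spin (b k) * spin (b l)

lemma LinearMap.apply_eq_sum_sum_map_single_mul [DecidableEq ι] (f : (ι → ι → ℝ) →ₗ[ℝ] ℝ)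
    (V : ι → ι → ℝ) :
    f V = ∑ k, ∑ l, f (Pi.single k (Pi.single l 1)) * V k l := by
  conv_lhs => rw [show V = ∑ k, ∑ l, V k l • Pi.single k (Pi.single l 1) by
    ext k l; simp [Finset.sum_apply, Pi.single_apply, apply_ite (fun g : ι → ℝ => g l)]]
  simp [map_sum, mul_comm]

lemma mem_convexHull_range_spinCorr {c : ι → ι → ℝ}
    (hc : ∀ Λ : Matrix ι ι ℝ, signGap Λ ≤ ∑ k, ∑ l, Λ k l * c k l) :
    c ∈ convexHull ℝ (range (spinCorr (ι := ι))) := by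
  classical
  by_contra hnot
  -- a separating functional is `V ↦ ∑ Λ k l * V k l` for some `Λ`, and this contradicts `hc Λ`
  obtain ⟨f, u, hfc, hfu⟩ := geometric_hahn_banach_point_closed (convex_convexHull ℝ _)
    ((finite_range _).isClosed_convexHull (𝕜 := ℝ)) hnot
  let Λ : Matrix ι ι ℝ := Matrix.of fun k l => f (Pi.single k (Pi.single l 1))
  have hf : ∀ V, f V = ∑ k, ∑ l, Λ k l * V k l :=
    LinearMap.apply_eq_sum_sum_map_single_mul f.toLinearMap
  have hu : u ≤ signGap Λ := le_signGap Λ fun b => by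
    simpa [hf, spinCorr, mul_assoc] using (hfu _ (subset_convexHull ℝ _ ⟨b, rfl⟩)).le
  linarith [hc Λ, hf c]

variable [DecidableEq ι]

def correlationWeights (c : ι → ι → ℝ) : Set ((ι → Bool) → ℝ) :=
  {w | (∀ b, 0 ≤ w b) ∧ ∑ b, w b = 1 ∧ (∀ b, w bᶜ = w b) ∧
    ∀ k l, ∑ b, w b * (spin (b k) * spin (b l)) = c k l}

lemma correlationWeights_nonempty {c : ι → ι → ℝ}
    (hc : ∀ Λ : Matrix ι ι ℝ, signGap Λ ≤ ∑ k, ∑ l, Λ k l * c k l) :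
    (correlationWeights c).Nonempty := by
  obtain ⟨w, hw0, hw1, hwc⟩ :=
    exists_weights_of_mem_convexHull_range (mem_convexHull_range_spinCorr hc)
  -- `spinCorr bᶜ = spinCorr b`, so averaging `w` with its flip keeps the correlations
  refine ⟨fun b => (w b + w bᶜ) / 2, fun b => by have := hw0 b; have := hw0 bᶜ; positivity,
    ?_, fun b => by simp [add_comm], fun k l => ?_⟩
  · simp [← Finset.sum_div, Finset.sum_add_distrib, sum_comp_compl w, hw1]
  have hc' : ∑ b, w b * (spin (b k) * spin (b l)) = c k l := by
    rw [← hwc]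
    simp [Finset.sum_apply, spinCorr]
  have hflip := sum_comp_compl fun b => w b * (spin (b k) * spin (b l))
  simp only [spin_compl, neg_mul_neg] at hflip
  calc ∑ b, (w b + w bᶜ) / 2 * (spin (b k) * spin (b l))
      = (∑ b, w b * (spin (b k) * spin (b l)) + ∑ b, w bᶜ * (spin (b k) * spin (b l))) / 2 := by
        rw [← Finset.sum_add_distrib, Finset.sum_div]
        exact Finset.sum_congr rfl fun b _ => by ring
    _ = c k l := by rw [hflip, hc']; ring

lemma sum_mul_spin_eq_zero {c : ι → ι → ℝ} {w : (ι → Bool) → ℝ} (hw : w ∈ correlationWeights c)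
    (k : ι) : ∑ b, w b * spin (b k) = 0 := by
  have hflip := sum_comp_compl fun b => w b * spin (b k)
  simp only [hw.2.2.1, spin_compl, mul_neg, Finset.sum_neg_distrib] at hflip
  linarith

lemma isCompact_correlationWeights (c : ι → ι → ℝ) : IsCompact (correlationWeights c) := by
  have hclosed : IsClosed (correlationWeights c) := by
    have : correlationWeights c = (⋂ b, {w | 0 ≤ w b}) ∩ {w | ∑ b, w b = 1} ∩
        (⋂ b, {w | w bᶜ = w b}) ∩ ⋂ k, ⋂ l, {w | ∑ b, w b * (spin (b k) * spin (b l)) = c k l} := by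
      ext w
      simp [correlationWeights, and_assoc]
    rw [this]
    refine (((isClosed_iInter fun b => isClosed_le continuous_const (continuous_apply b)).inter
      (isClosed_eq (continuous_finsetSum _ fun b _ => continuous_apply b) continuous_const)).inter
      (isClosed_iInter fun b => isClosed_eq (continuous_apply _) (continuous_apply b))).inter
      (isClosed_iInter fun k => isClosed_iInter fun l => isClosed_eq (continuous_finsetSum _
        fun b _ => (continuous_apply b).mul continuous_const) continuous_const)
  refine (isCompact_univ_pi fun _ => isCompact_Icc (a := (0 : ℝ)) (b := 1)).of_isClosed_subset
    hclosed fun w hw b _ => ⟨hw.1 b, ?_⟩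
  calc w b ≤ ∑ b', w b' := Finset.single_le_sum (fun b' _ => hw.1 b') (Finset.mem_univ b)
    _ = 1 := hw.2.1

end SpinCorrelations

section PushWeights

variable {α β : Type*} [Fintype α] [DecidableEq β]

def pushWeights (φ : α → β) (w : α → ℝ) (y : β) : ℝ := ∑ x with φ x = y, w x

lemma sum_pushWeights_mul [Fintype β] (φ : α → β) (w : α → ℝ) (F : β → ℝ) :
    ∑ y, pushWeights φ w y * F y = ∑ x, w x * F (φ x) := by
  simp only [pushWeights, Finset.sum_mul]
  rw [← Finset.sum_fiberwise Finset.univ φ fun x => w x * F (φ x)]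
  refine Finset.sum_congr rfl fun y _ => Finset.sum_congr rfl fun x hx => ?_
  rw [(Finset.mem_filter.1 hx).2]

lemma pushWeights_pushWeights {γ : Type*} [Fintype β] [DecidableEq γ] (φ : α → β) (ψ : β → γ)
    (w : α → ℝ) : pushWeights ψ (pushWeights φ w) = pushWeights (ψ ∘ φ) w := by
  ext z
  simpa [pushWeights, Finset.sum_filter] using
    sum_pushWeights_mul φ w fun y => if ψ y = z then (1 : ℝ) else 0

lemma continuous_pushWeights (φ : α → β) : Continuous (pushWeights φ) :=
  continuous_pi fun _ => continuous_finsetSum _ fun x _ => continuous_apply x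

lemma pushWeights_nonneg {φ : α → β} {w : α → ℝ} (hw : ∀ x, 0 ≤ w x) (y : β) :
    0 ≤ pushWeights φ w y :=
  Finset.sum_nonneg fun x _ => hw x

variable [MeasurableSpace α] [MeasurableSingletonClass α]

noncomputable def weightsPMF (w : α → ℝ) (hw0 : ∀ x, 0 ≤ w x) (hw1 : ∑ x, w x = 1) : PMF α :=
  PMF.ofFintype (fun x => ENNReal.ofReal (w x)) (by
    rw [← ENNReal.ofReal_sum_of_nonneg fun x _ => hw0 x, hw1, ENNReal.ofReal_one])

lemma integral_weightsPMF {w : α → ℝ} (hw0 : ∀ x, 0 ≤ w x) (hw1 : ∑ x, w x = 1) (f : α → ℝ) :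
    ∫ x, f x ∂(weightsPMF w hw0 hw1).toMeasure = ∑ x, w x * f x := by
  simp [PMF.integral_eq_sum, weightsPMF, ENNReal.toReal_ofReal (hw0 _)]

lemma map_weightsPMF [Fintype β] [MeasurableSpace β] [MeasurableSingletonClass β]
    (φ : α → β) {w : α → ℝ} (hw0 : ∀ x, 0 ≤ w x) (hw1 : ∑ x, w x = 1)
    (hφ0 : ∀ y, 0 ≤ pushWeights φ w y) (hφ1 : ∑ y, pushWeights φ w y = 1) :
    (weightsPMF w hw0 hw1).toMeasure.map φ = (weightsPMF (pushWeights φ w) hφ0 hφ1).toMeasure := by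
  rw [PMF.toMeasure_map _ _ (measurable_of_finite φ)]
  congr 1
  ext y
  simp only [weightsPMF, PMF.map_apply, PMF.ofFintype_apply, tsum_fintype, pushWeights,
    Finset.sum_filter]
  rw [ENNReal.ofReal_sum_of_nonneg fun x _ => by split_ifs <;> simp [hw0]]
  exact Finset.sum_congr rfl fun x _ => by split_ifs with h1 h2 h2 <;> simp_all [eq_comm]

end PushWeights

lemma pushWeights_comp_mem_correlationWeights {ι κ : Type*} [Fintype ι] [DecidableEq ι]
    [Fintype κ] [DecidableEq κ] {c : ι → ι → ℝ} {w : (ι → Bool) → ℝ}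
    (hw : w ∈ correlationWeights c) (e : κ → ι) :
    pushWeights (fun b => b ∘ e) w ∈ correlationWeights fun k l => c (e k) (e l) := by
  obtain ⟨hw0, hw1, hwflip, hwc⟩ := hw
  refine ⟨pushWeights_nonneg hw0, by simpa [hw1] using sum_pushWeights_mul _ w fun _ => 1,
    fun y => ?_, fun k l => by
    simpa [hwc] using
      sum_pushWeights_mul (fun b => b ∘ e) w fun y : κ → Bool => spin (y k) * spin (y l)⟩
  simp only [pushWeights, Finset.sum_filter]
  rw [← sum_comp_compl]
  refine Finset.sum_congr rfl fun x _ => ?_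
  simp only [hwflip, show xᶜ ∘ e = (x ∘ e)ᶜ from rfl, compl_inj_iff]

section FiniteKolmogorov

variable {ι : Type*} {α : ι → Type*} [∀ i, MeasurableSpace (α i)] [∀ i, Finite (α i)]
  {P : ∀ J : Finset ι, Measure (∀ j : J, α j)}

theorem isSigmaSubadditive_projectiveFamilyContent_of_finite (hP : IsProjectiveMeasureFamily P) :
    (projectiveFamilyContent hP).IsSigmaSubadditive := by
  let _ : ∀ i, TopologicalSpace (α i) := fun _ => ⊥
  have _ : ∀ i, DiscreteTopology (α i) := fun _ => ⟨rfl⟩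
  have hcyl : ∀ A ∈ measurableCylinders α, IsOpen A ∧ IsCompact A := by
    intro A hA
    obtain ⟨s, S, -, rfl⟩ := (mem_measurableCylinders A).1 hA
    exact ⟨(isOpen_discrete S).preimage (Finset.continuous_restrict s),
      ((isClosed_discrete S).preimage (Finset.continuous_restrict s)).isCompact⟩
  intro f hf hU
  obtain ⟨t, ht⟩ := (hcyl _ hU).2.elim_finite_subcover f (fun i => (hcyl _ (hf i)).1) subset_rfl
  calc projectiveFamilyContent hP (⋃ i, f i)
      ≤ projectiveFamilyContent hP (⋃ i ∈ t, f i) :=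
        addContent_mono isSetSemiring_measurableCylinders hU
          (isSetRing_measurableCylinders.biUnion_mem t fun i _ => hf i) ht
    _ ≤ ∑ i ∈ t, projectiveFamilyContent hP (f i) :=
        addContent_biUnion_le isSetRing_measurableCylinders fun i _ => hf i
    _ ≤ ∑' i, projectiveFamilyContent hP (f i) := ENNReal.sum_le_tsum t

theorem exists_isProjectiveLimit_of_finite (hP : IsProjectiveMeasureFamily P) :
    ∃ μ : Measure (∀ i, α i), IsProjectiveLimit μ P := by
  refine ⟨(projectiveFamilyContent hP).measure isSetSemiring_measurableCylinders
    generateFrom_measurableCylinders.ge (isSigmaSubadditive_projectiveFamilyContent_of_finite hP),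
    fun J => ?_⟩
  ext S hS
  rw [Measure.map_apply (Finset.measurable_restrict J) hS, ← cylinder,
    AddContent.measure_eq _ _ generateFrom_measurableCylinders.symm _
      (cylinder_mem_measurableCylinders J S hS), projectiveFamilyContent_cylinder hP hS]

end FiniteKolmogorov

theorem exists_compatible_family_of_isCompact {ι : Type*} {β : Finset ι → Type*}
    [∀ s, TopologicalSpace (β s)] [∀ s, T2Space (β s)] (K : ∀ s, Set (β s))
    (hK : ∀ s, IsCompact (K s)) (hKne : ∀ s, (K s).Nonempty)
    (π : ∀ {s t : Finset ι}, s ⊆ t → β t → β s)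
    (hπ : ∀ {s t : Finset ι} (h : s ⊆ t), Continuous (π h))
    (hπK : ∀ {s t : Finset ι} (h : s ⊆ t), MapsTo (π h) (K t) (K s))
    (hππ : ∀ {s t u : Finset ι} (hst : s ⊆ t) (htu : t ⊆ u) x,
      π hst (π htu x) = π (Finset.Subset.trans hst htu) x) :
    ∃ x : ∀ s, β s, (∀ s, x s ∈ K s) ∧ ∀ {s t : Finset ι} (h : s ⊆ t), x s = π h (x t) := by
  classical
  choose x₀ hx₀ using hKne
  -- `Φ t` is compatible below `t`; a cluster point of `Φ t` as `t` grows is compatible everywhere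
  let Φ : Finset ι → ∀ s, β s := fun t s => if h : s ⊆ t then π h (x₀ t) else x₀ s
  have hΦ : ∀ t, Φ t ∈ univ.pi K := fun t s _ => by
    by_cases h : s ⊆ t
    · simpa [Φ, h] using hπK h (hx₀ t)
    · simpa [Φ, h] using hx₀ s
  obtain ⟨x, hxK, hx⟩ := (isCompact_univ_pi hK).exists_mapClusterPt (f := atTop)
    (tendsto_principal.2 (Eventually.of_forall hΦ))
  refine ⟨x, fun s => hxK s trivial, fun {s t} h => ?_⟩
  refine (isClosed_eq (continuous_apply s) ((hπ h).comp (continuous_apply t))).mem_of_mapClusterPt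
    hx ?_
  filter_upwards [eventually_ge_atTop t] with u htu
  simp [Φ, Finset.Subset.trans h htu, htu, hππ]

theorem exists_spin_law {X : Type*} [DecidableEq X] (c : X → X → ℝ)
    (hc : ∀ s : Finset X, (correlationWeights fun a b : s => c a b).Nonempty) :
    ∃ μ : Measure (X → Bool), IsProbabilityMeasure μ ∧ (∀ x, ∫ b, spin (b x) ∂μ = 0) ∧
      ∀ x y, ∫ b, spin (b x) * spin (b y) ∂μ = c x y := by
  obtain ⟨u, hu, hcons⟩ := exists_compatible_family_of_isCompact
    (fun s : Finset X => correlationWeights fun a b : s => c a b)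
    (fun _ => isCompact_correlationWeights _) hc
    (fun h => pushWeights (Finset.restrict₂ (π := fun _ => Bool) h))
    (fun _ => continuous_pushWeights _)
    (fun {s t} h _ hw => pushWeights_comp_mem_correlationWeights hw fun a : s => (⟨a, h a.2⟩ : t))
    (fun _ _ w => by rw [pushWeights_pushWeights, Finset.restrict₂_comp_restrict₂])
  let P : ∀ s : Finset X, Measure (s → Bool) := fun s =>
    (weightsPMF (u s) (hu s).1 (hu s).2.1).toMeasure
  have hP : IsProjectiveMeasureFamily (α := fun _ : X => Bool) P := fun I J hJI => by
    simp only [P]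
    rw [map_weightsPMF _ _ _ (pushWeights_nonneg (hu I).1) (by rw [← hcons hJI]; exact (hu J).2.1)]
    congr 2
    exact hcons hJI
  obtain ⟨μ, hμ⟩ := exists_isProjectiveLimit_of_finite hP
  have hint : ∀ (s : Finset X) (F : (s → Bool) → ℝ),
      ∫ b, F (s.restrict b) ∂μ = ∑ z, u s z * F z := by
    intro s F
    rw [← integral_map (Finset.measurable_restrict s).aemeasurable
      (measurable_of_finite F).aestronglyMeasurable, hμ s, integral_weightsPMF]
  refine ⟨μ, hμ.isProbabilityMeasure, fun x => ?_, fun x y => ?_⟩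
  · exact (hint {x} fun z => spin (z ⟨x, Finset.mem_singleton_self x⟩)).trans
      (sum_mul_spin_eq_zero (hu _) _)
  · exact (hint {x, y} fun z => spin (z ⟨x, by simp⟩) * spin (z ⟨y, by simp⟩)).trans
      ((hu _).2.2.2 _ _)

section UnitProcess

variable {X : Type*} {P : Measure (X → ℝ)} [IsProbabilityMeasure P]
  (hsign : ∀ x, ∀ᵐ ω ∂P, ω x ∈ ({-1, 1} : Set ℝ))
include hsign

lemma integrable_eval_of_ae_sign (x : X) : Integrable (fun ω => ω x) P :=
  Integrable.of_bound (measurable_pi_apply x).aestronglyMeasurable 1 <| by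
    filter_upwards [hsign x] with ω hω
    simp only [mem_insert_iff, mem_singleton_iff] at hω
    rcases hω with h | h <;> simp [h]

lemma integrable_eval_mul_eval_of_ae_sign (x y : X) : Integrable (fun ω => ω x * ω y) P :=
  Integrable.of_bound ((measurable_pi_apply x).mul (measurable_pi_apply y)).aestronglyMeasurable 1 <|
    by
    filter_upwards [hsign x, hsign y] with ω hx hy
    simp only [mem_insert_iff, mem_singleton_iff] at hx hy
    rcases hx with h | h <;> rcases hy with h' | h' <;> simp [h, h']

omit [IsProbabilityMeasure P] in
lemma sq_sub_ae_eq_of_ae_sign (x y : X) :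
    (fun ω : X → ℝ => (ω x - ω y) ^ 2) =ᵐ[P] fun ω => 2 - 2 * (ω x * ω y) := by
  filter_upwards [hsign x, hsign y] with ω hx hy
  simp only [mem_insert_iff, mem_singleton_iff] at hx hy
  rcases hx with h | h <;> rcases hy with h' | h' <;> norm_num [h, h']

lemma half_integral_sq_sub_of_ae_sign (x y : X) :
    (1 / 2) * ∫ ω, (ω x - ω y) ^ 2 ∂P = 1 - ∫ ω, ω x * ω y ∂P := by
  rw [integral_congr_ae (sq_sub_ae_eq_of_ae_sign hsign x y), integral_sub (integrable_const 2)
    ((integrable_eval_mul_eval_of_ae_sign hsign x y).const_mul 2), integral_const,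
    integral_const_mul]
  simp only [probReal_univ, smul_eq_mul, one_mul]
  ring

lemma signGap_le_sum_mul_integral_of_ae_sign {ι : Type*} [Fintype ι] (pts : ι → X)
    (Λ : Matrix ι ι ℝ) : signGap Λ ≤ ∑ k, ∑ l, Λ k l * ∫ ω, ω (pts k) * ω (pts l) ∂P := by
  have hint : ∀ k l, Integrable (fun ω => Λ k l * (ω (pts k) * ω (pts l))) P := fun k l =>
    (integrable_eval_mul_eval_of_ae_sign hsign _ _).const_mul _
  calc signGap Λ = ∫ _, signGap Λ ∂P := by simp
    _ ≤ ∫ ω, ∑ k, ∑ l, Λ k l * (ω (pts k) * ω (pts l)) ∂P := by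
      refine integral_mono_ae (integrable_const _)
        (integrable_finsetSum _ fun k _ => integrable_finsetSum _ fun l _ => hint k l) ?_
      filter_upwards [ae_all_iff.2 fun k => hsign (pts k)] with ω hω
      simpa only [mul_assoc] using signGap_le Λ hω
    _ = ∑ k, ∑ l, Λ k l * ∫ ω, ω (pts k) * ω (pts l) ∂P := by
      rw [integral_finsetSum _ fun k _ => integrable_finsetSum _ fun l _ => hint k l]
      simp_rw [integral_finsetSum _ fun l _ => hint _ l, integral_const_mul]

lemma isUnitProcessSemivariogram_of_moments {g : X → X → ℝ} (hmean : ∀ x, ∫ ω, ω x ∂P = 0)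
    (hcorr : ∀ x y, ∫ ω, ω x * ω y ∂P = 1 - g x y) : IsUnitProcessSemivariogram g := by
  have hsq : ∀ x y, Integrable (fun ω => (ω x - ω y) ^ 2) P := fun x y =>
    ((integrable_const 2).sub ((integrable_eval_mul_eval_of_ae_sign hsign x y).const_mul 2)).congr
      (sq_sub_ae_eq_of_ae_sign hsign x y).symm
  refine ⟨P, inferInstance, hsign, fun x y => (integrable_eval_of_ae_sign hsign x).sub
    (integrable_eval_of_ae_sign hsign y), hsq, fun x y => ?_, fun x y => ?_⟩
  · rw [integral_sub (integrable_eval_of_ae_sign hsign x) (integrable_eval_of_ae_sign hsign y),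
      hmean, hmean, sub_zero]
  · rw [half_integral_sq_sub_of_ae_sign hsign, hcorr]
    ring

end UnitProcess

lemma isUnitProcessSemivariogram_of_spin_law {X : Type*} {g : X → X → ℝ} (μ : Measure (X → Bool))
    [IsProbabilityMeasure μ] (hmean : ∀ x, ∫ b, spin (b x) ∂μ = 0)
    (hcorr : ∀ x y, ∫ b, spin (b x) * spin (b y) ∂μ = 1 - g x y) :
    IsUnitProcessSemivariogram g := by
  have hT : Measurable fun (b : X → Bool) x => spin (b x) :=
    measurable_pi_lambda _ fun x => (measurable_of_finite spin).comp (measurable_pi_apply x)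
  have hsign : ∀ x, ∀ᵐ ω ∂μ.map fun b x => spin (b x), ω x ∈ ({-1, 1} : Set ℝ) := fun x =>
    (ae_map_iff hT.aemeasurable (measurable_pi_apply x (toFinite _).measurableSet)).2
      (Eventually.of_forall fun b => spin_mem (b x))
  have _ := Measure.isProbabilityMeasure_map (μ := μ) hT.aemeasurable
  refine isUnitProcessSemivariogram_of_moments hsign (fun x => ?_) fun x y => ?_
  · rw [integral_map hT.aemeasurable (measurable_pi_apply x).aestronglyMeasurable, hmean]
  · rw [integral_map (f := fun ω : X → ℝ => ω x * ω y) hT.aemeasurable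
      ((measurable_pi_apply x).mul (measurable_pi_apply y)).aestronglyMeasurable, hcorr]

theorem stmt16_general {X : Type*} (g : X → X → ℝ) :
    IsUnitProcessSemivariogram g ↔
    ((∀ x y, g x y = g y x) ∧
     ∀ (n : ℕ), 0 < n → ∀ (pts : Fin n → X) (Λ : Matrix (Fin n) (Fin n) ℝ), Λ.IsSymm →
       ∑ k, ∑ l, Λ k l * g (pts k) (pts l) ≤
         (∑ k, ∑ l, Λ k l) -
           sInf {v : ℝ | ∃ z : Fin n → ℝ, (∀ i, z i = -1 ∨ z i = 1) ∧
             v = ∑ k, ∑ l, Λ k l * z k * z l}) := by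
  classical
  constructor
  · rintro ⟨P, _, hsign, -, -, -, hg⟩
    have hcorr : ∀ x y, g x y = 1 - ∫ ω, ω x * ω y ∂P := fun x y => by
      rw [hg, half_integral_sq_sub_of_ae_sign hsign]
    refine ⟨fun x y => by simp only [hcorr, mul_comm], fun n _ pts Λ _ => ?_⟩
    have := signGap_le_sum_mul_integral_of_ae_sign hsign pts Λ
    simp only [hcorr, mul_sub, mul_one, Finset.sum_sub_distrib]
    change _ ≤ _ - signGap Λ
    linarith
  · rintro ⟨hsym, hineq⟩
    obtain ⟨μ, _, hmean, hcorr⟩ := exists_spin_law (fun x y => 1 - g x y) fun s =>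
      correlationWeights_nonempty (signGap_le_sum_mul_one_sub_of_forall_fin hsym hineq Subtype.val)
    exact isUnitProcessSemivariogram_of_spin_law μ hmean hcorr

theorem stmt16 {X : Type*} (g : X → X → ℝ) (hg : ∀ x y, g x y ∈ Set.Icc (0:ℝ) 2) :
    IsUnitProcessSemivariogram g ↔
    ((∀ x y, g x y = g y x) ∧
     ∀ (n : ℕ), 0 < n → ∀ (pts : Fin n → X) (Λ : Matrix (Fin n) (Fin n) ℝ), Λ.IsSymm →
       ∑ k, ∑ l, Λ k l * g (pts k) (pts l) ≤
         (∑ k, ∑ l, Λ k l) -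
           sInf {v : ℝ | ∃ z : Fin n → ℝ, (∀ i, z i = -1 ∨ z i = 1) ∧
             v = ∑ k, ∑ l, Λ k l * z k * z l}) :=
  stmt16_general g
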